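/- If a ≠ 0 and there exist X, Y ∈ k with X² = d² − μ12·ab, Y² = e² − μ13·ac, and μ21·(d+X)(e−Y) + μ23μ31·(d−X)(e+Y) − 2af = 0, then the explicit factorization Q = a⁻¹·(a·z1 + μ21·(d+X)·z2 + μ31·(e+Y)·z3)·(a·z1 + (d−X)·z2 + (e−Y)·z3) holds in S; equivalently, the coefficient equations hold: (μ21(d+X))·(d−X) = a·b, (μ31(e+Y))·(e−Y) = a·c, and μ21(d+X)(e−Y) + μ23·μ31(e+Y)(d−X) = 2af. -/

import Mathlib

/-- `Q = L·L'` in the skew polynomial algebra on three generators (relations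
`zj·zi = μij·zi·zj` for `i < j`), expressed via coefficients; here
`L = p.1·z1 + p.2.1·z2 + p.2.2·z3` and `L' = q.1·z1 + q.2.1·z2 + q.2.2·z3`. -/
def IsFactorization3 {k : Type*} [Field k] (μ12 μ13 μ23 a b c d e f : k)
    (p q : k × k × k) : Prop :=
  p.1 * q.1 = a ∧ p.2.1 * q.2.1 = b ∧ p.2.2 * q.2.2 = c ∧
  p.1 * q.2.1 + μ12 * p.2.1 * q.1 = 2 * d ∧
  p.1 * q.2.2 + μ13 * p.2.2 * q.1 = 2 * e ∧
  p.2.1 * q.2.2 + μ23 * p.2.2 * q.2.1 = 2 * f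

/-- If `a ≠ 0` and `X, Y` satisfy `X² = d² − μ12·ab`, `Y² = e² − μ13·ac` and
`μ21·(d+X)(e−Y) + μ23·μ31·(d−X)(e+Y) − 2af = 0`, then
`Q = a⁻¹·(a·z1 + μ21·(d+X)·z2 + μ31·(e+Y)·z3)·(a·z1 + (d−X)·z2 + (e−Y)·z3)`
in `S`; equivalently, the coefficient equations
`(μ21(d+X))·(d−X) = ab`, `(μ31(e+Y))·(e−Y) = ac` and
`μ21(d+X)(e−Y) + μ23·μ31(e+Y)(d−X) = 2af` hold. -/
theorem explicit_factorization_of_D8_eq_zero {k : Type*} [Field k]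
    [IsAlgClosed k] (h2 : (2 : k) ≠ 0) (μ12 μ13 μ23 : k)
    (hμ12 : μ12 ≠ 0) (hμ13 : μ13 ≠ 0) (hμ23 : μ23 ≠ 0)
    (a b c d e f : k) (ha : a ≠ 0) (X Y : k)
    (hX : X ^ 2 = d ^ 2 - μ12 * a * b) (hY : Y ^ 2 = e ^ 2 - μ13 * a * c)
    (hD8 : μ12⁻¹ * (d + X) * (e - Y) + μ23 * μ13⁻¹ * (d - X) * (e + Y)
      - 2 * a * f = 0) :
    IsFactorization3 μ12 μ13 μ23 a b c d e f
      (a⁻¹ • ((a : k), μ12⁻¹ * (d + X), μ13⁻¹ * (e + Y)))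
      ((a : k), d - X, e - Y) ∧
    (μ12⁻¹ * (d + X)) * (d - X) = a * b ∧
    (μ13⁻¹ * (e + Y)) * (e - Y) = a * c ∧
    μ12⁻¹ * (d + X) * (e - Y) + μ23 * (μ13⁻¹ * (e + Y)) * (d - X)
      = 2 * a * f := by
  have hb' : (d + X) * (d - X) = μ12 * (a * b) := by linear_combination -hX
  have hc' : (e + Y) * (e - Y) = μ13 * (a * c) := by linear_combination -hY
  have hf' := hD8
  field_simp at hf'
  have hb : (μ12⁻¹ * (d + X)) * (d - X) = a * b := by
    field_simp; linear_combination hb'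
  have hc : (μ13⁻¹ * (e + Y)) * (e - Y) = a * c := by
    field_simp; linear_combination hc'
  have hf : μ12⁻¹ * (d + X) * (e - Y) + μ23 * (μ13⁻¹ * (e + Y)) * (d - X)
      = 2 * a * f := by field_simp; linear_combination hf'
  refine ⟨⟨?_, ?_, ?_, ?_, ?_, ?_⟩, hb, hc, hf⟩ <;> simp only [Prod.smul_fst,
    Prod.smul_snd, smul_eq_mul]
  · field_simp
  · field_simp; linear_combination hb'
  · field_simp; linear_combination hc'
  · field_simp; ring
  · field_simp; ring
  · field_simp; linear_combination hf'
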